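/- arXiv:2003.10312 — 5 statements merged into one kernel-verified Lean document; each statement's English description precedes it below -/
import Mathlib

section
/- Let g : [0, ∞) → ℝ be a convex function with a minimizer at ρ* > 0. Assume g is twice differentiable on [3ρ*/4, 5ρ*/4] and there exists B > 0 such that g''(ρ) ≥ B for all ρ in this interval. Then for all ρ ≥ 0 with ρ ∉ [ρ*/2, 3ρ*/2], we have g(ρ) − g(ρ*) ≥ (ρ*·B/8)·|ρ − ρ*|. -/
/-!
On `[3ρ*/4, 5ρ*/4]` the function `g - B/2 (· - ρ*)²` is convex with a critical point at `ρ*`, so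
`g` rises by at least `B/2 · (ρ*/4)² = Bρ*²/32` at distance `ρ*/4` from the minimizer. Convexity
of `g` on `[0, ∞)` then makes `(g ρ - g ρ*) / |ρ - ρ*|` nondecreasing along rays from `ρ*`, so
beyond that distance the growth is at least `(Bρ*²/32) / (ρ*/4) = Bρ*/8` per unit.
-/

open Set

lemma HasDerivAt.sub_half_mul_sq {f : ℝ → ℝ} {f' x : ℝ} (hf : HasDerivAt f f' x) (B c : ℝ) :
    HasDerivAt (fun x ↦ f x - B / 2 * (x - c) ^ 2) (f' - B * (x - c)) x :=
  (hf.sub ((((hasDerivAt_id x).sub_const c).pow 2).const_mul (B / 2))).congr_deriv (by simp; ring)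

lemma convexOn_sub_half_mul_sq_of_le_deriv2 {f f' f'' : ℝ → ℝ} {a b B : ℝ}
    (hf : ∀ x ∈ Icc a b, HasDerivAt f (f' x) x) (hf' : ∀ x ∈ Icc a b, HasDerivAt f' (f'' x) x)
    (hB : ∀ x ∈ Icc a b, B ≤ f'' x) (c : ℝ) :
    ConvexOn ℝ (Icc a b) fun x ↦ f x - B / 2 * (x - c) ^ 2 := by
  have hderiv2 (x : ℝ) (hx : x ∈ Icc a b) :
      HasDerivAt (fun x ↦ f' x - B * (x - c)) (f'' x - B) x :=
    ((hf' x hx).sub (((hasDerivAt_id x).sub_const c).const_mul B)).congr_deriv (by simp)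
  exact convexOn_of_hasDerivWithinAt2_nonneg (convex_Icc a b)
    (fun x hx ↦ ((hf x hx).sub_half_mul_sq B c).continuousAt.continuousWithinAt)
    (fun x hx ↦ ((hf x (interior_subset hx)).sub_half_mul_sq B c).hasDerivWithinAt)
    (fun x hx ↦ (hderiv2 x (interior_subset hx)).hasDerivWithinAt)
    (fun x hx ↦ sub_nonneg.2 (hB x (interior_subset hx)))

lemma half_mul_sq_le_sub_of_le_deriv2 {f f' f'' : ℝ → ℝ} {a b B c x : ℝ}
    (hf : ∀ x ∈ Icc a b, HasDerivAt f (f' x) x) (hf' : ∀ x ∈ Icc a b, HasDerivAt f' (f'' x) x)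
    (hB : ∀ x ∈ Icc a b, B ≤ f'' x) (hc : c ∈ Ioo a b) (hcrit : f' c = 0) (hx : x ∈ Icc a b) :
    B / 2 * (x - c) ^ 2 ≤ f x - f c := by
  have hderiv := (hf c (Ioo_subset_Icc_self hc)).sub_half_mul_sq B c
  rw [hcrit, sub_self, mul_zero, sub_zero] at hderiv
  have hmin : f c - B / 2 * (c - c) ^ 2 ≤ f x - B / 2 * (x - c) ^ 2 :=
    (convexOn_sub_half_mul_sq_of_le_deriv2 hf hf' hB c).isMinOn_of_rightDeriv_eq_zero
      (by rwa [interior_Icc]) (hderiv.hasDerivWithinAt.derivWithin (uniqueDiffWithinAt_Ioi c)) hx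
  rw [sub_self, zero_pow two_ne_zero, mul_zero, sub_zero] at hmin
  linarith

lemma ConvexOn.div_mul_abs_sub_le_sub {f : ℝ → ℝ} {s : Set ℝ} (hf : ConvexOn ℝ s f)
    {c x r m : ℝ} (hc : c ∈ s) (hx : x ∈ s) (hr : 0 < r) (hrx : r ≤ |x - c|)
    (hm : ∀ y ∈ s, |y - c| = r → m ≤ f y - f c) :
    m / r * |x - c| ≤ f x - f c := by
  set t := r / |x - c|
  have hxc : 0 < |x - c| := hr.trans_le hrx
  have ht₀ : 0 < t := div_pos hr hxc
  have ht₁ : t ≤ 1 := (div_le_one hxc).2 hrx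
  have hy : (1 - t) • c + t • x ∈ s := hf.1 hc hx (by linarith) ht₀.le (by ring)
  have hchord : f ((1 - t) • c + t • x) ≤ (1 - t) • f c + t • f x :=
    hf.2 hc hx (by linarith) ht₀.le (by ring)
  simp only [smul_eq_mul] at hy hchord
  have hdist : |(1 - t) * c + t * x - c| = r := by
    rw [show (1 - t) * c + t * x - c = t * (x - c) by ring, abs_mul, abs_of_pos ht₀,
      div_mul_cancel₀ _ hxc.ne']
  have hm_le : m ≤ t * (f x - f c) := by linarith [hm _ hy hdist]
  calc m / r * |x - c| = m / t := by simp only [t]; field_simp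
    _ ≤ f x - f c := by rw [div_le_iff₀ ht₀]; linarith

theorem convex_linear_growth_general (g g' g'' : ℝ → ℝ) (ρstar B : ℝ)
    (hρ : 0 < ρstar)
    (hconv : ConvexOn ℝ (Set.Ici 0) g)
    (hmin : ∀ ρ ∈ Set.Ici (0 : ℝ), g ρstar ≤ g ρ)
    (hderiv : ∀ ρ ∈ Set.Icc (3 / 4 * ρstar) (5 / 4 * ρstar), HasDerivAt g (g' ρ) ρ)
    (hderiv2 : ∀ ρ ∈ Set.Icc (3 / 4 * ρstar) (5 / 4 * ρstar), HasDerivAt g' (g'' ρ) ρ)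
    (hlow : ∀ ρ ∈ Set.Icc (3 / 4 * ρstar) (5 / 4 * ρstar), B ≤ g'' ρ) :
    ∀ ρ : ℝ, 0 ≤ ρ → ρ ∉ Set.Icc (1 / 2 * ρstar) (3 / 2 * ρstar) →
      ρstar * B / 8 * |ρ - ρstar| ≤ g ρ - g ρstar := by
  intro ρ hρ₀ hfar
  have hρI : ρstar ∈ Ioo (3 / 4 * ρstar) (5 / 4 * ρstar) := ⟨by linarith, by linarith⟩
  have hcrit : g' ρstar = 0 :=
    ((isMinOn_iff.2 hmin).isLocalMin (Ici_mem_nhds hρ)).hasDerivAt_eq_zero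
      (hderiv ρstar (Ioo_subset_Icc_self hρI))
  have hquad (y : ℝ) (_ : y ∈ Ici 0) (hy : |y - ρstar| = ρstar / 4) :
      B / 2 * (ρstar / 4) ^ 2 ≤ g y - g ρstar := by
    have hyI : y ∈ Icc (3 / 4 * ρstar) (5 / 4 * ρstar) := by
      constructor <;> cases abs_eq (by positivity) |>.1 hy <;> linarith
    simpa [← hy, sq_abs] using half_mul_sq_le_sub_of_le_deriv2 hderiv hderiv2 hlow hρI hcrit hyI
  have hr : ρstar / 4 ≤ |ρ - ρstar| := by
    rw [mem_Icc, not_and_or, not_le, not_le] at hfar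
    rcases hfar with h | h
    · rw [abs_of_neg (by linarith)]; linarith
    · rw [abs_of_pos (by linarith)]; linarith
  convert hconv.div_mul_abs_sub_le_sub hρ.le hρ₀ (by positivity) hr hquad using 1
  field_simp
  ring

theorem convex_linear_growth (g g' g'' : ℝ → ℝ) (ρstar B : ℝ)
    (hρ : 0 < ρstar) (hB : 0 < B)
    (hconv : ConvexOn ℝ (Set.Ici 0) g)
    (hmin : ∀ ρ ∈ Set.Ici (0 : ℝ), g ρstar ≤ g ρ)
    (hderiv : ∀ ρ ∈ Set.Icc (3 / 4 * ρstar) (5 / 4 * ρstar), HasDerivAt g (g' ρ) ρ)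
    (hderiv2 : ∀ ρ ∈ Set.Icc (3 / 4 * ρstar) (5 / 4 * ρstar), HasDerivAt g' (g'' ρ) ρ)
    (hlow : ∀ ρ ∈ Set.Icc (3 / 4 * ρstar) (5 / 4 * ρstar), B ≤ g'' ρ) :
    ∀ ρ : ℝ, 0 ≤ ρ → ρ ∉ Set.Icc (1 / 2 * ρstar) (3 / 2 * ρstar) →
      ρstar * B / 8 * |ρ - ρstar| ≤ g ρ - g ρstar :=
  convex_linear_growth_general g g' g'' ρstar B hρ hconv hmin hderiv hderiv2 hlow
end

section
/- Let ξ be a Gaussian vector on ℝᵈ with mean μ ≠ 0 and covariance σ²·I with σ > 0. Then the set of maximizers over θ of P(ξᵀθ > 0) is exactly {λμ : λ > 0}. -/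
open MeasureTheory ProbabilityTheory
open scoped InnerProductSpace

/-- `ξ` is a Gaussian random vector on `ℝᵈ` with mean `μ` and covariance `σ² I`:
every linear functional `⟪v, ξ⟫` has law `N(⟪v, μ⟫, σ²‖v‖²)`. -/
def IsGaussianVec {Ω : Type*} [MeasurableSpace Ω] {d : ℕ} (P : Measure Ω)
    (ξ : Ω → EuclideanSpace ℝ (Fin d)) (μ : EuclideanSpace ℝ (Fin d)) (σ : ℝ) : Prop :=
  ∀ v : EuclideanSpace ℝ (Fin d),
    Measure.map (fun ω => ⟪v, ξ ω⟫_ℝ) P =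
      gaussianReal ⟪v, μ⟫_ℝ ((σ ^ 2 * ‖v‖ ^ 2).toNNReal)

/-!
For `θ ≠ 0` the variable `⟪θ, ξ⟫ / ‖θ‖` has law `N(⟪θ, μ⟫ / ‖θ‖, σ²)`, so
`P(⟪θ, ξ⟫ > 0) = N(⟪θ, μ⟫ / ‖θ‖, σ²)(0, ∞)`, which is strictly increasing in the mean
`⟪θ, μ⟫ / ‖θ‖ = ‖μ‖ cos ∠(θ, μ)`. By the equality case of Cauchy–Schwarz this mean attains its
maximum `‖μ‖` exactly on the open ray through `μ`; and `θ = 0` gives probability `0`.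
-/

open Set NNReal

lemma inner_lt_norm_mul_norm_of_not_exists_pos_smul {V : Type*} [NormedAddCommGroup V]
    [InnerProductSpace ℝ V] {x y : V} (hx : x ≠ 0) (hy : y ≠ 0)
    (h : ¬∃ r : ℝ, 0 < r ∧ y = r • x) : ⟪x, y⟫_ℝ < ‖x‖ * ‖y‖ := by
  refine (real_inner_le_norm x y).lt_of_ne fun heq => h ?_
  exact (InnerProductGeometry.angle_eq_zero_iff.mp
    ((InnerProductGeometry.inner_eq_mul_norm_iff_angle_eq_zero hx hy).mp heq)).2

lemma setOf_pos_inner_smul_left {Ω V : Type*} [NormedAddCommGroup V] [InnerProductSpace ℝ V]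
    (ξ : Ω → V) (v : V) {c : ℝ} (hc : 0 < c) :
    {ω | 0 < ⟪c • v, ξ ω⟫_ℝ} = {ω | 0 < ⟪v, ξ ω⟫_ℝ} := by
  ext ω
  simp only [mem_ofPred_eq, real_inner_smul_left, mul_pos_iff_of_pos_left hc]

lemma gaussianReal_Ioi_strictAnti (m : ℝ) {v : ℝ≥0} (hv : v ≠ 0) :
    StrictAnti fun a => gaussianReal m v (Ioi a) := by
  intro a b hab
  have hIoc : gaussianReal m v (Ioc a b) ≠ 0 := fun h =>
    hab.not_ge (by simpa using gaussianReal_absolutelyContinuous' m hv h)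
  calc gaussianReal m v (Ioi b)
      < gaussianReal m v (Ioi b) + gaussianReal m v (Ioc a b) :=
        ENNReal.lt_add_right (measure_ne_top _ _) hIoc
    _ = gaussianReal m v (Ioi a) := by
        rw [add_comm, ← measure_union (Ioc_disjoint_Ioi le_rfl) measurableSet_Ioi,
          Ioc_union_Ioi_eq_Ioi hab.le]

lemma gaussianReal_Ioi_zero (m : ℝ) (v : ℝ≥0) :
    gaussianReal m v (Ioi 0) = gaussianReal 0 v (Ioi (-m)) := by
  rw [← zero_add m, ← gaussianReal_map_add_const,
    Measure.map_apply (measurable_add_const m) measurableSet_Ioi, preimage_add_const_Ioi,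
    zero_sub, zero_add]

lemma gaussianReal_Ioi_zero_strictMono {v : ℝ≥0} (hv : v ≠ 0) :
    StrictMono fun m => gaussianReal m v (Ioi 0) := by
  intro m m' hm
  simp only [gaussianReal_Ioi_zero m, gaussianReal_Ioi_zero m']
  exact gaussianReal_Ioi_strictAnti 0 hv (neg_lt_neg hm)

namespace IsGaussianVec

variable {Ω : Type*} [MeasurableSpace Ω] {d : ℕ} {P : Measure Ω}
  {ξ : Ω → EuclideanSpace ℝ (Fin d)} {μ : EuclideanSpace ℝ (Fin d)} {σ : ℝ}

lemma measure_pos_inner (hξ : IsGaussianVec P ξ μ σ) (v : EuclideanSpace ℝ (Fin d)) :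
    P {ω | 0 < ⟪v, ξ ω⟫_ℝ} = gaussianReal ⟪v, μ⟫_ℝ ((σ ^ 2 * ‖v‖ ^ 2).toNNReal) (Ioi 0) := by
  have hmeas : AEMeasurable (fun ω => ⟪v, ξ ω⟫_ℝ) P :=
    AEMeasurable.of_map_ne_zero (by rw [hξ v]; exact IsProbabilityMeasure.ne_zero _)
  rw [← hξ v, Measure.map_apply_of_aemeasurable hmeas measurableSet_Ioi]
  rfl

lemma measure_pos_inner_of_ne_zero (hξ : IsGaussianVec P ξ μ σ)
    {θ : EuclideanSpace ℝ (Fin d)} (hθ : θ ≠ 0) :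
    P {ω | 0 < ⟪θ, ξ ω⟫_ℝ} = gaussianReal (⟪θ, μ⟫_ℝ / ‖θ‖) ((σ ^ 2).toNNReal) (Ioi 0) := by
  have hθn : 0 < ‖θ‖ := norm_pos_iff.mpr hθ
  rw [← setOf_pos_inner_smul_left ξ θ (inv_pos.mpr hθn), hξ.measure_pos_inner,
    norm_smul, real_inner_smul_left, norm_inv, norm_norm, inv_mul_cancel₀ hθn.ne', one_pow,
    mul_one, inv_mul_eq_div]

lemma measure_pos_inner_lt (hξ : IsGaussianVec P ξ μ σ) (hσ : σ ≠ 0) (hμ : μ ≠ 0)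
    {θ : EuclideanSpace ℝ (Fin d)} (hθ : ¬∃ l : ℝ, 0 < l ∧ θ = l • μ) :
    P {ω | 0 < ⟪θ, ξ ω⟫_ℝ} < P {ω | 0 < ⟪μ, ξ ω⟫_ℝ} := by
  have hv : (σ ^ 2).toNNReal ≠ 0 := by simpa using hσ
  have hμn : 0 < ‖μ‖ := norm_pos_iff.mpr hμ
  rw [hξ.measure_pos_inner_of_ne_zero hμ, real_inner_self_eq_norm_sq, sq,
    mul_div_cancel_right₀ _ hμn.ne']
  by_cases hθ0 : θ = 0
  · have hIoi : gaussianReal ‖μ‖ (σ ^ 2).toNNReal (Ioi 0) ≠ 0 := fun h => by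
      simpa using gaussianReal_absolutelyContinuous' _ hv h
    simpa [hθ0] using pos_iff_ne_zero.mpr hIoi
  · rw [hξ.measure_pos_inner_of_ne_zero hθ0]
    refine gaussianReal_Ioi_zero_strictMono hv ((div_lt_iff₀ (norm_pos_iff.mpr hθ0)).mpr ?_)
    rw [real_inner_comm]
    exact inner_lt_norm_mul_norm_of_not_exists_pos_smul hμ hθ0 hθ

end IsGaussianVec

theorem optimal_classifiers_characterization_general
    {Ω : Type*} [MeasurableSpace Ω] {d : ℕ} (P : Measure Ω)
    (ξ : Ω → EuclideanSpace ℝ (Fin d)) (μ : EuclideanSpace ℝ (Fin d)) (σ : ℝ)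
    (hσ : 0 < σ) (hμ : μ ≠ 0) (hξ : IsGaussianVec P ξ μ σ) :
    {θ : EuclideanSpace ℝ (Fin d) |
        ∀ θ' : EuclideanSpace ℝ (Fin d),
          P {ω | 0 < ⟪θ', ξ ω⟫_ℝ} ≤ P {ω | 0 < ⟪θ, ξ ω⟫_ℝ}} =
      {θ : EuclideanSpace ℝ (Fin d) | ∃ l : ℝ, 0 < l ∧ θ = l • μ} := by
  ext θ
  constructor
  · intro hmax
    by_contra hθ
    exact (hmax μ).not_gt (hξ.measure_pos_inner_lt hσ.ne' hμ hθ)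
  · rintro ⟨l, hl, rfl⟩ θ'
    rw [setOf_pos_inner_smul_left ξ μ hl]
    by_cases hθ' : ∃ l' : ℝ, 0 < l' ∧ θ' = l' • μ
    · obtain ⟨l', hl', rfl⟩ := hθ'
      rw [setOf_pos_inner_smul_left ξ μ hl']
    · exact (hξ.measure_pos_inner_lt hσ.ne' hμ hθ').le

theorem optimal_classifiers_characterization
    {Ω : Type*} [MeasurableSpace Ω] {d : ℕ} (P : Measure Ω) [IsProbabilityMeasure P]
    (ξ : Ω → EuclideanSpace ℝ (Fin d)) (μ : EuclideanSpace ℝ (Fin d)) (σ : ℝ)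
    (hσ : 0 < σ) (hμ : μ ≠ 0) (hmeas : Measurable ξ) (hξ : IsGaussianVec P ξ μ σ) :
    {θ : EuclideanSpace ℝ (Fin d) |
        ∀ θ' : EuclideanSpace ℝ (Fin d),
          P {ω | 0 < ⟪θ', ξ ω⟫_ℝ} ≤ P {ω | 0 < ⟪θ, ξ ω⟫_ℝ}} =
      {θ : EuclideanSpace ℝ (Fin d) | ∃ l : ℝ, 0 < l ∧ θ = l • μ} :=
  optimal_classifiers_characterization_general P ξ μ σ hσ hμ hξ
end

section
/- Let ξ ~ N(μ, σ²I) on ℝᵈ with μ ≠ 0 and σ > 0, and define g(ρ) = −E[μᵀξ / (1 + exp(ρ·μᵀξ))]. Then g is strictly increasing in ρ, and g(2/σ²) = 0; consequently ρ* = 2/σ² is the unique zero of g. -/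
/-!
The law of `X = ⟪μ, ξ⟫` is `N(m, σ²m)` with `m = ‖μ‖²`, so `g ρ = -E[X / (1 + exp (ρX))]`.
For `x ≠ 0` the integrand is strictly decreasing in `ρ`, and `X ≠ 0` almost surely, so `g` is
strictly increasing. The density `p` of `N(m, v)` satisfies `p(-x) = exp(-2mx/v) p(x)`, which makes
`p(x) · x / (1 + exp (2mx/v))` odd; hence its integral vanishes and `g(2/σ²) = 0`.
-/

open MeasureTheory ProbabilityTheory
open scoped InnerProductSpace

open Real

lemma strictAnti_div_one_add_exp_mul {x : ℝ} (hx : x ≠ 0) :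
    StrictAnti fun ρ : ℝ => x / (1 + exp (ρ * x)) := by
  intro ρ₁ ρ₂ hρ
  dsimp only
  have hd₁ : 0 < 1 + exp (ρ₁ * x) := by positivity
  have hd₂ : 0 < 1 + exp (ρ₂ * x) := by positivity
  rw [div_lt_div_iff₀ hd₂ hd₁]
  rcases hx.lt_or_gt with hneg | hpos
  · have : exp (ρ₂ * x) < exp (ρ₁ * x) := exp_lt_exp.2 (mul_lt_mul_of_neg_right hρ hneg)
    nlinarith
  · have : exp (ρ₁ * x) < exp (ρ₂ * x) := exp_lt_exp.2 (mul_lt_mul_of_pos_right hρ hpos)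
    nlinarith

lemma abs_div_one_add_exp_mul_le (ρ x : ℝ) : |x / (1 + exp (ρ * x))| ≤ |x| := by
  rw [abs_div, abs_of_pos (by positivity : 0 < 1 + exp (ρ * x))]
  exact div_le_self (abs_nonneg x) (by linarith [exp_pos (ρ * x)])

lemma measurable_div_one_add_exp_mul (ρ : ℝ) : Measurable fun x : ℝ => x / (1 + exp (ρ * x)) := by
  fun_prop

lemma integrable_div_one_add_exp_mul {ν : Measure ℝ} (hν : Integrable id ν) (ρ : ℝ) :
    Integrable (fun x => x / (1 + exp (ρ * x))) ν :=
  hν.mono (measurable_div_one_add_exp_mul ρ).aestronglyMeasurable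
    (ae_of_all _ (abs_div_one_add_exp_mul_le ρ))

lemma integral_lt_integral_of_ae_lt {α : Type*} [MeasurableSpace α] {ν : Measure α} [NeZero ν]
    {f g : α → ℝ} (hf : Integrable f ν) (hg : Integrable g ν) (hlt : ∀ᵐ x ∂ν, f x < g x) :
    ∫ x, f x ∂ν < ∫ x, g x ∂ν := by
  rw [← sub_pos, ← integral_sub hg hf,
    integral_pos_iff_support_of_nonneg_ae (hlt.mono fun x hx => sub_nonneg.2 hx.le) (hg.sub hf)]
  have hsupp : (Function.support fun x => g x - f x) =ᵐ[ν] (Set.univ : Set α) :=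
    ae_eq_univ.2 (ae_iff.1 (hlt.mono fun x hx => (sub_pos.2 hx).ne'))
  rw [measure_congr hsupp]
  exact Measure.measure_univ_pos.2 (NeZero.ne ν)

lemma strictAnti_integral_div_one_add_exp_mul {ν : Measure ℝ} [NeZero ν] (hν : Integrable id ν)
    (h₀ : ν {0} = 0) : StrictAnti fun ρ : ℝ => ∫ x, x / (1 + exp (ρ * x)) ∂ν := by
  intro ρ₁ ρ₂ hρ
  have hne : ∀ᵐ x ∂ν, x ≠ 0 := (measure_eq_zero_iff_ae_notMem.1 h₀).mono fun _ hx => hx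
  exact integral_lt_integral_of_ae_lt (integrable_div_one_add_exp_mul hν ρ₂)
    (integrable_div_one_add_exp_mul hν ρ₁)
    (hne.mono fun x hx => strictAnti_div_one_add_exp_mul hx hρ)

lemma gaussianPDFReal_neg (m : ℝ) (v : NNReal) (x : ℝ) :
    gaussianPDFReal m v (-x) = exp (-(2 * m / v * x)) * gaussianPDFReal m v x := by
  simp only [gaussianPDFReal]
  rw [mul_left_comm, ← exp_add]
  congr 2
  ring

lemma integral_eq_zero_of_odd {G : Type*} [MeasurableSpace G] [AddGroup G] [MeasurableNeg G]
    {ν : Measure G} [ν.IsNegInvariant] {f : G → ℝ} (hf : f.Odd) : ∫ x, f x ∂ν = 0 := by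
  have h := integral_neg_eq_self f ν
  rw [show (fun x => f (-x)) = fun x => -f x from funext hf, integral_neg] at h
  linarith

lemma integral_div_one_add_exp_gaussianReal_eq_zero (m : ℝ) {v : NNReal} (hv : v ≠ 0) :
    ∫ x, x / (1 + exp (2 * m / v * x)) ∂gaussianReal m v = 0 := by
  rw [integral_gaussianReal_eq_integral_smul hv]
  refine integral_eq_zero_of_odd fun x => ?_
  simp only [smul_eq_mul, gaussianPDFReal_neg, mul_neg]
  generalize 2 * m / v * x = t
  have hprod : exp (-t) * exp t = 1 := by rw [← exp_add, neg_add_cancel, exp_zero]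
  field_simp
  linear_combination -(gaussianPDFReal m v x * x) * hprod

theorem logistic_line_derivative_unique_zero_general
    {Ω : Type*} [MeasurableSpace Ω] {d : ℕ} (P : Measure Ω)
    (ξ : Ω → EuclideanSpace ℝ (Fin d)) (μ : EuclideanSpace ℝ (Fin d)) (σ : ℝ)
    (hσ : 0 < σ) (hμ : μ ≠ 0) (hmeas : Measurable ξ) (hξ : IsGaussianVec P ξ μ σ)
    (g : ℝ → ℝ)
    (hg : ∀ ρ, g ρ = -∫ ω, ⟪μ, ξ ω⟫_ℝ / (1 + Real.exp (ρ * ⟪μ, ξ ω⟫_ℝ)) ∂P) :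
    StrictMono g ∧ g (2 / σ ^ 2) = 0 ∧ ∀ ρ, g ρ = 0 → ρ = 2 / σ ^ 2 := by
  set m := ‖μ‖ ^ 2
  set v := (σ ^ 2 * m).toNNReal
  have hm : 0 < m := by have := norm_ne_zero_iff.2 hμ; positivity
  have hv_coe : (v : ℝ) = σ ^ 2 * m := Real.coe_toNNReal _ (by positivity)
  have hv : v ≠ 0 := by rw [← NNReal.coe_ne_zero, hv_coe]; positivity
  have hlaw : P.map (fun ω => ⟪μ, ξ ω⟫_ℝ) = gaussianReal m v := by
    simpa only [real_inner_self_eq_norm_sq] using hξ μ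
  have hg_eq : g = fun ρ => -∫ x, x / (1 + exp (ρ * x)) ∂gaussianReal m v := by
    funext ρ
    rw [hg, ← hlaw,
      integral_map (by fun_prop) (measurable_div_one_add_exp_mul ρ).aestronglyMeasurable]
  have hmono : StrictMono g := by
    rw [hg_eq]
    exact (strictAnti_integral_div_one_add_exp_mul ((memLp_id_gaussianReal 1).integrable le_rfl)
      (gaussianReal_absolutelyContinuous m hv (measure_singleton 0))).neg
  have hzero : g (2 / σ ^ 2) = 0 := by
    have hroot : 2 / σ ^ 2 = 2 * m / v := by rw [hv_coe]; field_simp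
    rw [hg_eq, hroot]
    exact neg_eq_zero.2 (integral_div_one_add_exp_gaussianReal_eq_zero m hv)
  exact ⟨hmono, hzero, fun ρ hρ => hmono.injective (hρ.trans hzero.symm)⟩

theorem logistic_line_derivative_unique_zero
    {Ω : Type*} [MeasurableSpace Ω] {d : ℕ} (P : Measure Ω) [IsProbabilityMeasure P]
    (ξ : Ω → EuclideanSpace ℝ (Fin d)) (μ : EuclideanSpace ℝ (Fin d)) (σ : ℝ)
    (hσ : 0 < σ) (hμ : μ ≠ 0) (hmeas : Measurable ξ) (hξ : IsGaussianVec P ξ μ σ)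
    (g : ℝ → ℝ)
    (hg : ∀ ρ, g ρ = -∫ ω, ⟪μ, ξ ω⟫_ℝ / (1 + Real.exp (ρ * ⟪μ, ξ ω⟫_ℝ)) ∂P) :
    StrictMono g ∧ g (2 / σ ^ 2) = 0 ∧ ∀ ρ, g ρ = 0 → ρ = 2 / σ ^ 2 :=
  logistic_line_derivative_unique_zero_general P ξ μ σ hσ hμ hmeas hξ g hg
end

section
/- Fix a step-size α > 0 and σ > 0. Let θ₀ = 0 and θ_k = θ_{k−1} + α·c_k·ξ_k where ξ_k are i.i.d. N(μ, σ²I) on ℝᵈ and c_k ∈ [0,1] is any F_{k−1}×σ(ξ_k)-measurable coefficient (covering logistic: c_k = 1/(1+exp(ξ_kᵀθ_{k−1})); and hinge: c_k = 1{ξ_kᵀθ_{k−1} ≤ 1}). Let v be a unit vector with vᵀμ = 0, and let T be a stopping time (w.r.t. the natural filtration) with E[T] < ∞. Then E[|vᵀθ_T|] ≤ σ·α·√(2/π)·E[T]. -/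
open MeasureTheory ProbabilityTheory
open scoped InnerProductSpace

/-!
Each step changes `⟪v, θ⟫` by `α c_k ⟪v, ξ_k⟫` with `0 ≤ c_k ≤ 1`, so
`|⟪v, θ_T⟫| ≤ α ∑_{k<T} |⟪v, ξ_{k+1}⟫|`. The event `{k < T}` is `F_k`-measurable and `ξ_{k+1}` is
independent of `F_k`, so by Wald's identity the expectation of the right-hand side is
`α E|⟪v, ξ_1⟫| E[T]`; since `⟪v, μ⟫ = 0`, `⟪v, ξ_1⟫ ~ N(0, σ²)` and `E|⟪v, ξ_1⟫| = σ √(2/π)`.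
-/

open Finset Real
open scoped ENNReal NNReal

theorem integral_Ioi_mul_exp_neg_mul_sq {b : ℝ} (hb : 0 < b) :
    ∫ x in Set.Ioi (0 : ℝ), x * rexp (-b * x ^ 2) = (2 * b)⁻¹ := by
  have h := integral_mul_cexp_neg_mul_sq (b := (b : ℂ)) (by simpa using hb)
  simp_rw [← Complex.ofReal_pow, ← Complex.ofReal_neg, ← Complex.ofReal_mul, ← Complex.ofReal_exp,
    ← Complex.ofReal_mul, integral_complex_ofReal] at h
  exact_mod_cast h

theorem integral_abs_gaussianReal_zero (v : ℝ≥0) :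
    ∫ x, |x| ∂gaussianReal 0 v = √(2 * v / π) := by
  rcases eq_or_ne v 0 with rfl | hv
  · simp [gaussianReal_zero_var]
  have hv' : (0 : ℝ) < v := by positivity
  calc ∫ x, |x| ∂gaussianReal 0 v
      = (√(2 * π * v))⁻¹ * ∫ x, |x| * rexp (-(2 * (v : ℝ))⁻¹ * |x| ^ 2) := by
        rw [integral_gaussianReal_eq_integral_smul hv, ← integral_const_mul]
        congr with x
        simp only [gaussianPDFReal, sub_zero, smul_eq_mul, sq_abs]
        ring_nf
    _ = (√(2 * π * v))⁻¹ * (2 * (2 * (2 * (v : ℝ))⁻¹)⁻¹) := by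
        rw [integral_comp_abs (f := fun x => x * rexp (-(2 * (v : ℝ))⁻¹ * x ^ 2)),
          integral_Ioi_mul_exp_neg_mul_sq (by positivity)]
    _ = √(2 * v / π) := by
        rw [sqrt_div' _ pi_pos.le, show 2 * π * v = π * (2 * v) by ring,
          sqrt_mul pi_pos.le]
        have h2v : √(2 * (v : ℝ)) ^ 2 = 2 * v := sq_sqrt (by positivity)
        have : 0 < √π := sqrt_pos.2 pi_pos
        have : 0 < √(2 * (v : ℝ)) := sqrt_pos.2 (by positivity)
        field_simp
        linear_combination -h2v

theorem lintegral_ofReal_abs_gaussianReal_zero (v : ℝ≥0) :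
    ∫⁻ x, ENNReal.ofReal |x| ∂gaussianReal 0 v = ENNReal.ofReal √(2 * v / π) := by
  have hint : Integrable (fun x : ℝ => |x|) (gaussianReal 0 v) :=
    ((memLp_id_gaussianReal 1).integrable le_rfl).abs
  rw [← integral_abs_gaussianReal_zero,
    ofReal_integral_eq_lintegral_ofReal hint (ae_of_all _ fun _ => abs_nonneg _)]

theorem IsGaussianVec.lintegral_ofReal_abs_inner {Ω : Type*} {m0 : MeasurableSpace Ω}
    {P : Measure Ω} {d : ℕ} {ξ : Ω → EuclideanSpace ℝ (Fin d)} {μ : EuclideanSpace ℝ (Fin d)}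
    {σ : ℝ} (hξ : IsGaussianVec P ξ μ σ) (hξm : Measurable ξ) (hσ : 0 ≤ σ)
    {v : EuclideanSpace ℝ (Fin d)} (hvμ : ⟪v, μ⟫_ℝ = 0) :
    ∫⁻ ω, ENNReal.ofReal |⟪v, ξ ω⟫_ℝ| ∂P = ENNReal.ofReal (σ * ‖v‖ * √(2 / π)) := by
  have hlaw := hξ v
  rw [hvμ] at hlaw
  rw [← lintegral_map (f := fun x => ENNReal.ofReal |x|) (by fun_prop) (by fun_prop), hlaw,
    lintegral_ofReal_abs_gaussianReal_zero, Real.coe_toNNReal _ (by positivity),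
    show 2 * (σ ^ 2 * ‖v‖ ^ 2) / π = (σ * ‖v‖) ^ 2 * (2 / π) by ring,
    sqrt_mul (by positivity), sqrt_sq (by positivity)]

theorem iIndepFun.indep_comap_natural_of_lt {Ω E : Type*} {m0 : MeasurableSpace Ω}
    {P : Measure Ω} [TopologicalSpace E] [TopologicalSpace.MetrizableSpace E]
    [mE : MeasurableSpace E] [BorelSpace E] {ξ : ℕ → Ω → E} (hmeas : ∀ k, StronglyMeasurable (ξ k))
    (hindep : iIndepFun ξ P) {j k : ℕ} (hjk : k < j) :
    Indep (MeasurableSpace.comap (ξ j) mE) (Filtration.natural ξ hmeas k) P := by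
  have h := indep_iSup_of_disjoint (fun i => (hmeas i).measurable.comap_le) hindep
    (S := {j}) (T := Set.Iic k) (by simpa using hjk.not_ge)
  simp only [Set.mem_singleton_iff, iSup_iSup_eq_left, Set.mem_Iic] at h
  exact h

section Wald

variable {Ω : Type*} {m0 : MeasurableSpace Ω} {P : Measure Ω} {T : Ω → ℕ}

theorem lintegral_sum_range_eq_tsum_setLIntegral {Y : ℕ → Ω → ℝ≥0∞} (hY : ∀ k, Measurable (Y k))
    (hT : ∀ k, MeasurableSet {ω | k < T ω}) :
    ∫⁻ ω, ∑ k ∈ range (T ω), Y k ω ∂P = ∑' k, ∫⁻ ω in {ω | k < T ω}, Y k ω ∂P := by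
  have hsum : ∀ ω, ∑ k ∈ range (T ω), Y k ω = ∑' k, {ω | k < T ω}.indicator (Y k) ω := by
    intro ω
    rw [tsum_eq_sum (s := range (T ω)) (fun k hk => by simp_all)]
    exact sum_congr rfl fun k hk => by simp_all
  simp_rw [hsum, ← lintegral_indicator (hT _)]
  exact lintegral_tsum fun k => ((hY k).indicator (hT k)).aemeasurable

theorem lintegral_natCast_eq_tsum_measure_lt (hT : ∀ k, MeasurableSet {ω | k < T ω}) :
    ∫⁻ ω, (T ω : ℝ≥0∞) ∂P = ∑' k, P {ω | k < T ω} := by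
  simpa using lintegral_sum_range_eq_tsum_setLIntegral (P := P) (fun _ => measurable_one) hT

theorem setLIntegral_eq_lintegral_mul_of_indep {mY mF : MeasurableSpace Ω} (hmY : mY ≤ m0)
    (hmF : mF ≤ m0) (hind : Indep mY mF P) {Y : Ω → ℝ≥0∞} (hY : Measurable[mY] Y) {s : Set Ω}
    (hs : MeasurableSet[mF] s) :
    ∫⁻ ω in s, Y ω ∂P = (∫⁻ ω, Y ω ∂P) * P s := by
  rw [← lintegral_indicator (hmF _ hs), ← lintegral_indicator_one (hmF _ hs),
    ← lintegral_mul_eq_lintegral_mul_lintegral_of_independent_measurableSpace hmY hmF hind hY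
      (measurable_one.indicator hs)]
  congr with ω
  by_cases hω : ω ∈ s <;> simp [hω]

theorem lintegral_sum_range_stoppingTime_eq_mul {F : Filtration ℕ m0}
    (hT : IsStoppingTime F fun ω => (T ω : WithTop ℕ)) {Y : ℕ → Ω → ℝ≥0∞}
    {mY : ℕ → MeasurableSpace Ω} (hmY : ∀ k, mY k ≤ m0) (hY : ∀ k, Measurable[mY k] (Y k))
    (hind : ∀ k, Indep (mY k) (F k) P) {m : ℝ≥0∞} (hmean : ∀ k, ∫⁻ ω, Y k ω ∂P = m) :
    ∫⁻ ω, ∑ k ∈ range (T ω), Y k ω ∂P = m * ∫⁻ ω, (T ω : ℝ≥0∞) ∂P := by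
  have hTF : ∀ k, MeasurableSet[F k] {ω | k < T ω} := fun k => by
    simpa using hT.measurableSet_gt k
  have hT0 : ∀ k, MeasurableSet {ω | k < T ω} := fun k => F.le k _ (hTF k)
  rw [lintegral_sum_range_eq_tsum_setLIntegral (fun k => (hY k).mono (hmY k) le_rfl) hT0,
    lintegral_natCast_eq_tsum_measure_lt hT0, ← ENNReal.tsum_mul_left]
  congr with k
  rw [setLIntegral_eq_lintegral_mul_of_indep (hmY k) (F.le k) (hind k) (hY k) (hTF k), hmean]

end Wald

theorem abs_inner_le_mul_sum_of_eq_add_smul {E : Type*} [NormedAddCommGroup E]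
    [InnerProductSpace ℝ E] {θ ξ : ℕ → E} {c : ℕ → ℝ} {α : ℝ} (hα : 0 ≤ α)
    (hc : ∀ k, c k ∈ Set.Icc (0 : ℝ) 1) (hθ0 : θ 0 = 0)
    (hθ : ∀ k, θ (k + 1) = θ k + (α * c (k + 1)) • ξ (k + 1)) (v : E) (n : ℕ) :
    |⟪v, θ n⟫_ℝ| ≤ α * ∑ k ∈ range n, |⟪v, ξ (k + 1)⟫_ℝ| := by
  have hstep : ∀ k < n, dist ⟪v, θ k⟫_ℝ ⟪v, θ (k + 1)⟫_ℝ ≤ α * |⟪v, ξ (k + 1)⟫_ℝ| := by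
    intro k _
    rw [dist_comm, Real.dist_eq, hθ, inner_add_right, inner_smul_right, add_sub_cancel_left,
      abs_mul, abs_of_nonneg (mul_nonneg hα (hc _).1)]
    exact mul_le_mul_of_nonneg_right (mul_le_of_le_one_right hα (hc _).2) (abs_nonneg _)
  simpa [Real.dist_eq, hθ0, mul_sum] using
    dist_le_range_sum_of_dist_le (f := fun k => ⟪v, θ k⟫_ℝ) n fun hk => hstep _ hk

theorem integral_le_of_lintegral_ofReal_le {α : Type*} [MeasurableSpace α] {μ : Measure α}
    {f : α → ℝ} {b : ℝ} (hf : 0 ≤ f) (hb : 0 ≤ b)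
    (h : ∫⁻ a, ENNReal.ofReal (f a) ∂μ ≤ ENNReal.ofReal b) : ∫ a, f a ∂μ ≤ b := by
  refine (le_abs_self _).trans <| (norm_integral_le_lintegral_norm f).trans <|
    ENNReal.toReal_le_of_le_ofReal hb ?_
  simpa [abs_of_nonneg (hf _)] using h

theorem sgd_angle_bound_general
    {Ω : Type*} {m0 : MeasurableSpace Ω} (P : Measure Ω) [IsProbabilityMeasure P]
    {d : ℕ} (μ : EuclideanSpace ℝ (Fin d)) (σ α : ℝ) (hσ : 0 < σ) (hα : 0 < α)
    (ξ : ℕ → Ω → EuclideanSpace ℝ (Fin d))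
    (hmeas : ∀ k, StronglyMeasurable (ξ k))
    (hindep : iIndepFun ξ P)
    (hgauss : ∀ k, IsGaussianVec P (ξ k) μ σ)
    (c : ℕ → Ω → ℝ) (hc01 : ∀ k ω, c k ω ∈ Set.Icc (0 : ℝ) 1)
    (θ : ℕ → Ω → EuclideanSpace ℝ (Fin d))
    (hθ0 : ∀ ω, θ 0 ω = 0)
    (hθ : ∀ k ω, θ (k + 1) ω = θ k ω + (α * c (k + 1) ω) • ξ (k + 1) ω)
    (v : EuclideanSpace ℝ (Fin d)) (hv : ‖v‖ = 1) (hvμ : ⟪v, μ⟫_ℝ = 0)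
    (T : Ω → ℕ) (hT : IsStoppingTime (MeasureTheory.Filtration.natural ξ hmeas) (fun ω => (T ω : WithTop ℕ)))
    (hTint : Integrable (fun ω => (T ω : ℝ)) P) :
    ∫ ω, |⟪v, θ (T ω) ω⟫_ℝ| ∂P ≤
      σ * α * Real.sqrt (2 / Real.pi) * ∫ ω, (T ω : ℝ) ∂P := by
  have hpath : ∀ ω, ENNReal.ofReal |⟪v, θ (T ω) ω⟫_ℝ|
      ≤ ENNReal.ofReal α * ∑ k ∈ range (T ω), ENNReal.ofReal |⟪v, ξ (k + 1) ω⟫_ℝ| := fun ω => by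
    rw [← ENNReal.ofReal_sum_of_nonneg fun _ _ => abs_nonneg _, ← ENNReal.ofReal_mul hα.le]
    exact ENNReal.ofReal_le_ofReal <| abs_inner_le_mul_sum_of_eq_add_smul (θ := (θ · ω))
      (ξ := (ξ · ω)) hα.le (fun k => hc01 k ω) (hθ0 ω) (fun k => hθ k ω) v (T ω)
  have hmean : ∀ k, ∫⁻ ω, ENNReal.ofReal |⟪v, ξ (k + 1) ω⟫_ℝ| ∂P
      = ENNReal.ofReal (σ * √(2 / π)) := fun k => by
    simpa [hv] using
      (hgauss (k + 1)).lintegral_ofReal_abs_inner (hmeas (k + 1)).measurable hσ.le hvμ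
  have hwald := lintegral_sum_range_stoppingTime_eq_mul hT
    (fun k => (hmeas (k + 1)).measurable.comap_le)
    (fun k => ((measurable_const.inner measurable_id).abs.ennreal_ofReal).comp
      (comap_measurable (ξ (k + 1))))
    (fun k => hindep.indep_comap_natural_of_lt hmeas k.lt_succ_self) hmean
  have hET : ∫⁻ ω, (T ω : ℝ≥0∞) ∂P = ENNReal.ofReal (∫ ω, (T ω : ℝ) ∂P) := by
    rw [ofReal_integral_eq_lintegral_ofReal hTint (ae_of_all _ fun ω => Nat.cast_nonneg _)]
    simp
  have hET0 : 0 ≤ ∫ ω, (T ω : ℝ) ∂P := integral_nonneg fun _ => Nat.cast_nonneg _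
  refine integral_le_of_lintegral_ofReal_le (fun _ => abs_nonneg _) (by positivity) ?_
  calc ∫⁻ ω, ENNReal.ofReal |⟪v, θ (T ω) ω⟫_ℝ| ∂P
      ≤ ∫⁻ ω, ENNReal.ofReal α * ∑ k ∈ range (T ω), ENNReal.ofReal |⟪v, ξ (k + 1) ω⟫_ℝ| ∂P :=
        lintegral_mono hpath
    _ = ENNReal.ofReal α *
          (ENNReal.ofReal (σ * √(2 / π)) * ENNReal.ofReal (∫ ω, (T ω : ℝ) ∂P)) := by
        rw [lintegral_const_mul' _ _ ENNReal.ofReal_ne_top, ← hET, ← hwald]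
        rfl
    _ = ENNReal.ofReal (σ * α * √(2 / π) * ∫ ω, (T ω : ℝ) ∂P) := by
        rw [← ENNReal.ofReal_mul (by positivity), ← ENNReal.ofReal_mul hα.le]
        congr 1
        ring

theorem sgd_angle_bound
    {Ω : Type*} {m0 : MeasurableSpace Ω} (P : Measure Ω) [IsProbabilityMeasure P]
    {d : ℕ} (μ : EuclideanSpace ℝ (Fin d)) (σ α : ℝ) (hσ : 0 < σ) (hα : 0 < α)
    (ξ : ℕ → Ω → EuclideanSpace ℝ (Fin d))
    (hmeas : ∀ k, StronglyMeasurable (ξ k))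
    (hindep : iIndepFun ξ P)
    (hgauss : ∀ k, IsGaussianVec P (ξ k) μ σ)
    (c : ℕ → Ω → ℝ) (hc01 : ∀ k ω, c k ω ∈ Set.Icc (0 : ℝ) 1)
    (hcmeas : ∀ k, Measurable[(MeasureTheory.Filtration.natural ξ hmeas) k] (c k))
    (θ : ℕ → Ω → EuclideanSpace ℝ (Fin d))
    (hθ0 : ∀ ω, θ 0 ω = 0)
    (hθ : ∀ k ω, θ (k + 1) ω = θ k ω + (α * c (k + 1) ω) • ξ (k + 1) ω)
    (v : EuclideanSpace ℝ (Fin d)) (hv : ‖v‖ = 1) (hvμ : ⟪v, μ⟫_ℝ = 0)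
    (T : Ω → ℕ) (hT : IsStoppingTime (MeasureTheory.Filtration.natural ξ hmeas) (fun ω => (T ω : WithTop ℕ)))
    (hTint : Integrable (fun ω => (T ω : ℝ)) P) :
    ∫ ω, |⟪v, θ (T ω) ω⟫_ℝ| ∂P ≤
      σ * α * Real.sqrt (2 / Real.pi) * ∫ ω, (T ω : ℝ) ∂P :=
  sgd_angle_bound_general (m0 := m0) P μ σ α hσ hα ξ hmeas hindep hgauss c hc01 θ hθ0 hθ v hv hvμ T
    hT hTint
end

section
/- Let f(θ) = E[ℓ(ξᵀθ)] where ξ ~ N(μ, σ²I), μ ≠ 0, σ > 0, and ℓ is either the logistic loss ℓ(x) = −x + log(1 + eˣ) at label 1 (i.e. ℓ(x) = log(1+e^{−x})) or the hinge loss ℓ(x) = max(1−x, 0). Decompose θ = ρμ + θ̃ with μᵀθ̃ = 0. Then f(θ) ≥ f(ρμ). -/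
/-!
Both losses are convex with linear growth. Since `θt ⟂ μ`, the scores `⟪θ, ξ⟫` and `⟪ρ • μ, ξ⟫`
are Gaussians with the same mean `⟪θ, μ⟫` and variances `σ²‖θ‖² ≥ σ²‖ρ • μ‖²`, so it suffices
that `E f(m + sZ)` (`Z` standard normal, `f` convex) is nondecreasing in `|s|`. By the symmetry
`Z ~ -Z` it equals `½ E[f(m + sZ) + f(m - sZ)]`, and `s ↦ f(m + sz) + f(m - sz)` is convex and even,
hence nondecreasing in `|s|`.
-/

open MeasureTheory ProbabilityTheory
open scoped InnerProductSpace

open Set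
open scoped NNReal

theorem ConvexOn.add_smul_add_sub_smul_le {E : Type*} [AddCommGroup E] [Module ℝ E]
    {f : E → ℝ} (hf : ConvexOn ℝ univ f) (x y : E) {s t : ℝ} (hst : |s| ≤ |t|) :
    f (x + s • y) + f (x - s • y) ≤ f (x + t • y) + f (x - t • y) := by
  let g : ℝ → ℝ := fun r => f (x + r • y) + f (x - r • y)
  have hg : ConvexOn ℝ univ g := by
    have hg_eq : g = f ∘ AffineMap.lineMap x (x + y) + f ∘ AffineMap.lineMap x (x - y) := by
      ext r
      simp [g, AffineMap.lineMap_apply, add_comm, sub_eq_add_neg]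
    have hline : ∀ z : E, ConvexOn ℝ univ (f ∘ AffineMap.lineMap x z) := fun z => by
      simpa only [preimage_univ] using hf.comp_affineMap (AffineMap.lineMap x z)
    rw [hg_eq]
    exact (hline _).add (hline _)
  have hg_even : ∀ r, g (-r) = g r := fun r => by
    simp only [g, neg_smul, sub_neg_eq_add, ← sub_eq_add_neg, add_comm]
  have hg_abs : g |t| = g t := by
    rcases abs_choice t with h | h <;> rw [h]; exact hg_even t
  show g s ≤ g t
  calc g s ≤ max (g (-|t|)) (g |t|) :=
        hg.le_max_of_mem_Icc (mem_univ _) (mem_univ _) (abs_le.mp hst)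
    _ = g t := by rw [hg_even, max_self, hg_abs]

theorem gaussianReal_map_const_add_mul (m : ℝ) {c : ℝ} {v : ℝ≥0} (hc : c ^ 2 = v) :
    (gaussianReal 0 1).map (fun z => m + c * z) = gaussianReal m v := by
  have hcomp : (fun z => m + c * z) = (m + ·) ∘ (c * ·) := rfl
  rw [hcomp, ← Measure.map_map (measurable_const_add m) (measurable_const_mul c),
    gaussianReal_map_const_mul, gaussianReal_map_const_add, mul_zero, zero_add, mul_one]
  exact congrArg _ (NNReal.eq hc)

theorem integral_gaussianReal_symmetrize {f : ℝ → ℝ} {m : ℝ} {v : ℝ≥0}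
    (hf : Integrable f (gaussianReal m v)) :
    Integrable (fun z => f (m + √v * z) + f (m - √v * z)) (gaussianReal 0 1) ∧
      2 * ∫ x, f x ∂gaussianReal m v =
        ∫ z, (f (m + √v * z) + f (m - √v * z)) ∂gaussianReal 0 1 := by
  have hsq : √(v : ℝ) ^ 2 = v := Real.sq_sqrt v.coe_nonneg
  have hbranch : ∀ c : ℝ, c ^ 2 = v →
      Integrable (fun z => f (m + c * z)) (gaussianReal 0 1) ∧
        ∫ z, f (m + c * z) ∂gaussianReal 0 1 = ∫ x, f x ∂gaussianReal m v := fun c hc => by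
    have hmeas : Measurable fun z : ℝ => m + c * z := by fun_prop
    rw [← gaussianReal_map_const_add_mul m hc] at hf ⊢
    exact ⟨hf.comp_measurable hmeas, (integral_map hmeas.aemeasurable hf.1).symm⟩
  obtain ⟨hint_plus, hplus⟩ := hbranch √v hsq
  obtain ⟨hint_minus, hminus⟩ := hbranch (-√v) (by rw [neg_sq, hsq])
  simp only [neg_mul, ← sub_eq_add_neg] at hint_minus hminus
  refine ⟨hint_plus.add hint_minus, ?_⟩
  rw [integral_add hint_plus hint_minus, hplus, hminus, two_mul]

theorem ConvexOn.integral_gaussianReal_le_of_variance_le {f : ℝ → ℝ} (hf : ConvexOn ℝ univ f)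
    {m : ℝ} {v w : ℝ≥0} (hv : Integrable f (gaussianReal m v))
    (hw : Integrable f (gaussianReal m w)) (hvw : v ≤ w) :
    ∫ x, f x ∂gaussianReal m v ≤ ∫ x, f x ∂gaussianReal m w := by
  obtain ⟨hint_v, hsym_v⟩ := integral_gaussianReal_symmetrize hv
  obtain ⟨hint_w, hsym_w⟩ := integral_gaussianReal_symmetrize hw
  have hsqrt : |√(v : ℝ)| ≤ |√(w : ℝ)| := by
    rw [abs_of_nonneg (Real.sqrt_nonneg _), abs_of_nonneg (Real.sqrt_nonneg _)]
    exact Real.sqrt_le_sqrt (NNReal.coe_le_coe.mpr hvw)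
  have h2 : 2 * ∫ x, f x ∂gaussianReal m v ≤ 2 * ∫ x, f x ∂gaussianReal m w := by
    rw [hsym_v, hsym_w]
    refine integral_mono hint_v hint_w fun z => ?_
    simpa only [smul_eq_mul, mul_comm z] using hf.add_smul_add_sub_smul_le m z hsqrt
  linarith

theorem convexOn_logisticLoss : ConvexOn ℝ univ fun x : ℝ => Real.log (1 + Real.exp (-x)) := by
  have hderiv : ∀ x : ℝ, HasDerivAt (fun x : ℝ => Real.log (1 + Real.exp (-x)))
      (-(Real.exp x + 1)⁻¹) x := fun x => by
    have h := (((hasDerivAt_neg x).exp).const_add 1).log (by positivity)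
    convert h using 1
    rw [Real.exp_neg]
    field_simp
  refine Monotone.convexOn_univ_of_deriv (fun x => (hderiv x).differentiableAt) ?_
  rw [funext fun x => (hderiv x).deriv]
  exact fun a b hab => neg_le_neg <| inv_anti₀ (by positivity) <| by gcongr

theorem abs_logisticLoss_le (x : ℝ) : |Real.log (1 + Real.exp (-x))| ≤ 1 + |x| := by
  have hpos : 0 < 1 + Real.exp (-x) := by positivity
  rw [abs_of_nonneg (Real.log_nonneg (by linarith [Real.exp_pos (-x)])),
    Real.log_le_iff_le_exp hpos, Real.exp_add]
  have h2 : (2 : ℝ) ≤ Real.exp 1 := by linarith [Real.add_one_le_exp (1 : ℝ)]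
  have h1 : (1 : ℝ) ≤ Real.exp |x| := Real.one_le_exp (abs_nonneg x)
  have hneg : Real.exp (-x) ≤ Real.exp |x| := Real.exp_le_exp.mpr (neg_le_abs x)
  nlinarith

theorem convexOn_hingeLoss : ConvexOn ℝ univ fun x : ℝ => max (1 - x) 0 :=
  ((convexOn_const 1 convex_univ).sub (concaveOn_id convex_univ)).sup
    (convexOn_const 0 convex_univ)

theorem abs_hingeLoss_le (x : ℝ) : |max (1 - x) 0| ≤ 1 + |x| := by
  rw [abs_of_nonneg (le_max_right _ _)]
  exact max_le (by linarith [neg_abs_le x]) (by positivity)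

theorem integrable_of_abs_le_one_add_abs {ν : Measure ℝ} [IsFiniteMeasure ν]
    (hid : Integrable id ν) {f : ℝ → ℝ} (hf : AEStronglyMeasurable f ν)
    (hbound : ∀ x, |f x| ≤ 1 + |x|) : Integrable f ν :=
  ((integrable_const 1).add hid.abs).mono' hf (ae_of_all _ hbound)

theorem IsGaussianVec.integral_comp_inner {Ω : Type*} [MeasurableSpace Ω] {d : ℕ}
    {P : Measure Ω} {ξ : Ω → EuclideanSpace ℝ (Fin d)} {μ : EuclideanSpace ℝ (Fin d)} {σ : ℝ}
    (hξ : IsGaussianVec P ξ μ σ) (v : EuclideanSpace ℝ (Fin d)) {f : ℝ → ℝ}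
    (hf : AEStronglyMeasurable f (gaussianReal ⟪v, μ⟫_ℝ (σ ^ 2 * ‖v‖ ^ 2).toNNReal)) :
    ∫ ω, f ⟪v, ξ ω⟫_ℝ ∂P = ∫ x, f x ∂gaussianReal ⟪v, μ⟫_ℝ (σ ^ 2 * ‖v‖ ^ 2).toNNReal :=
  -- A non-measurable map would push `P` forward to `0`, not to a Gaussian.
  have hlaw : HasLaw (fun ω => ⟪v, ξ ω⟫_ℝ) _ P :=
    ⟨.of_map_ne_zero (by rw [hξ v]; exact IsProbabilityMeasure.ne_zero _), hξ v⟩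
  hlaw.integral_comp hf

theorem orthogonal_component_increases_loss_general
    {Ω : Type*} [MeasurableSpace Ω] {d : ℕ} (P : Measure Ω)
    (ξ : Ω → EuclideanSpace ℝ (Fin d)) (μ : EuclideanSpace ℝ (Fin d)) (σ : ℝ)
    (hξ : IsGaussianVec P ξ μ σ)
    (ℓ : ℝ → ℝ)
    (hℓ : (∀ x, ℓ x = Real.log (1 + Real.exp (-x))) ∨ (∀ x, ℓ x = max (1 - x) 0))
    (θ θt : EuclideanSpace ℝ (Fin d)) (ρ : ℝ)
    (hdecomp : θ = ρ • μ + θt) (horth : ⟪μ, θt⟫_ℝ = 0) :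
    ∫ ω, ℓ ⟪ρ • μ, ξ ω⟫_ℝ ∂P ≤ ∫ ω, ℓ ⟪θ, ξ ω⟫_ℝ ∂P := by
  obtain ⟨hconv, hbound⟩ : ConvexOn ℝ univ ℓ ∧ ∀ x, |ℓ x| ≤ 1 + |x| := by
    rcases hℓ with h | h <;> obtain rfl := funext h
    exacts [⟨convexOn_logisticLoss, abs_logisticLoss_le⟩, ⟨convexOn_hingeLoss, abs_hingeLoss_le⟩]
  have hint : ∀ m v, Integrable ℓ (gaussianReal m v) := fun m v =>
    integrable_of_abs_le_one_add_abs ((memLp_id_gaussianReal 1).integrable le_rfl)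
      (continuousOn_univ.mp (hconv.continuousOn isOpen_univ)).aestronglyMeasurable hbound
  have hperp : ⟪ρ • μ, θt⟫_ℝ = 0 := by rw [real_inner_smul_left, horth, mul_zero]
  have hmean : ⟪θ, μ⟫_ℝ = ⟪ρ • μ, μ⟫_ℝ := by
    rw [hdecomp, inner_add_left, real_inner_comm μ θt, horth, add_zero]
  have hvar : σ ^ 2 * ‖ρ • μ‖ ^ 2 ≤ σ ^ 2 * ‖θ‖ ^ 2 := by
    have hpyth := norm_add_sq_eq_norm_sq_add_norm_sq_real hperp
    rw [← hdecomp] at hpyth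
    nlinarith [sq_nonneg σ, mul_self_nonneg ‖θt‖]
  rw [hξ.integral_comp_inner _ (hint _ _).1, hξ.integral_comp_inner _ (hint _ _).1, hmean]
  exact hconv.integral_gaussianReal_le_of_variance_le (hint _ _) (hint _ _)
    (Real.toNNReal_le_toNNReal hvar)

theorem orthogonal_component_increases_loss
    {Ω : Type*} [MeasurableSpace Ω] {d : ℕ} (P : Measure Ω) [IsProbabilityMeasure P]
    (ξ : Ω → EuclideanSpace ℝ (Fin d)) (μ : EuclideanSpace ℝ (Fin d)) (σ : ℝ)
    (hσ : 0 < σ) (hμ : μ ≠ 0) (hmeas : Measurable ξ) (hξ : IsGaussianVec P ξ μ σ)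
    (ℓ : ℝ → ℝ)
    (hℓ : (∀ x, ℓ x = Real.log (1 + Real.exp (-x))) ∨ (∀ x, ℓ x = max (1 - x) 0))
    (θ θt : EuclideanSpace ℝ (Fin d)) (ρ : ℝ)
    (hdecomp : θ = ρ • μ + θt) (horth : ⟪μ, θt⟫_ℝ = 0) :
    ∫ ω, ℓ ⟪ρ • μ, ξ ω⟫_ℝ ∂P ≤ ∫ ω, ℓ ⟪θ, ξ ω⟫_ℝ ∂P :=
  orthogonal_component_increases_loss_general P ξ μ σ hξ ℓ hℓ θ θt ρ hdecomp horth
end
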